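/- Let k = ℂ, n = 2m, and consider the basic G_a-action on V = ℂ^{n+1}. Every point (a,b) in the Zariski closure of the graph Γ = {(x, t*x)} that does not lie in Γ itself satisfies: the first m coordinates of a and of b vanish, and b_m = (-1)^m a_m. -/

import Mathlib

/-!
On the graph `Γ`, the generating series `y(s) = ∑ yᵢ sⁱ` of `y = t * x` agrees with
`e^{ts} x(s)` up to order `n`. Hence for power series `F₁ ≈ g` and `F₂ ≈ e^{ts} g` the
Wronskian `F₂' F₁ - F₁' F₂` equals `t F₁ F₂` up to order `n`, and its coefficients are
polynomial pairs `(N, D)` with `N = t D` on `Γ`. At a point `(a, b)` of the closure with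
`D(a, b) ≠ 0` the polynomial relations `D^j (y_j - ((N / D) * x)_j) = 0` give
`b = (N / D)(a, b) * a`; so off `Γ` every such `D` vanishes at `(a, b)`.

With `F₁ = x(s)`, `F₂ = y(s)` this gives `∑ aᵢ b_{l-i} = 0` for `l < n`, and with
`F₁ = x(s) - y(-s)`, `F₂ = -F₁(-s)` it gives `∑ σᵢ (-1)^{k-i} σ_{k-i} = 0` for `k ≤ n`,
where `σᵢ = aᵢ - (-1)ⁱ bᵢ`. If `a` and `b` vanish below `r < m`, the coefficients `2r` of
these identities read `a_r b_r = 0` and `σ_r² = 0`, so `a_r = b_r = 0`; at `r = m` the second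
one gives `σ_m = 0`.
-/

/-- The basic `G_a`-action on `k^{n+1}`. -/
def gaAct (k : Type*) [Field k] (n : ℕ) (t : k) (z : Fin (n + 1) → k) :
    Fin (n + 1) → k :=
  fun j => ∑ i ∈ Finset.Iic j,
    t ^ ((j : ℕ) - (i : ℕ)) / (((j : ℕ) - (i : ℕ)).factorial : k) * z i

namespace PowerSeries

section CommSemiring

variable {A : Type*} [CommSemiring A]

theorem derivative_map {B : Type*} [CommSemiring B] (f : A →+* B) (φ : A⟦X⟧) :
    d⁄dX B (map f φ) = map f (d⁄dX A φ) := by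
  ext n
  simp [coeff_derivative, coeff_map]

theorem derivative_rescale (t : A) (φ : A⟦X⟧) :
    d⁄dX A (rescale t φ) = C t * rescale t (d⁄dX A φ) := by
  ext n
  rw [coeff_derivative, coeff_rescale, coeff_C_mul, coeff_rescale, coeff_derivative, pow_succ]
  ring

@[simp]
theorem constantCoeff_rescale (c : A) (φ : A⟦X⟧) :
    constantCoeff (rescale c φ) = constantCoeff φ := by
  rw [← coeff_zero_eq_constantCoeff_apply, coeff_rescale, pow_zero, one_mul,
    coeff_zero_eq_constantCoeff_apply]

theorem X_pow_dvd_rescale {k : ℕ} {φ : A⟦X⟧} (c : A) (h : X ^ k ∣ φ) :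
    X ^ k ∣ rescale c φ := by
  rw [X_pow_dvd_iff] at h ⊢
  intro i hi
  rw [coeff_rescale, h i hi, mul_zero]

theorem X_pow_dvd_derivative {k : ℕ} {φ : A⟦X⟧} (h : X ^ (k + 1) ∣ φ) :
    X ^ k ∣ d⁄dX A φ := by
  rw [X_pow_dvd_iff] at h ⊢
  intro i hi
  rw [coeff_derivative, h (i + 1) (by omega), zero_mul]

theorem X_pow_succ_dvd {r : ℕ} {φ : A⟦X⟧} (h : X ^ r ∣ φ) (hr : coeff r φ = 0) :
    X ^ (r + 1) ∣ φ := by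
  rw [X_pow_dvd_iff] at h ⊢
  intro i hi
  rcases (Nat.lt_succ_iff.mp hi).lt_or_eq with hi | rfl
  exacts [h i hi, hr]

theorem coeff_add_mul_of_X_pow_dvd {r s : ℕ} {φ ψ : A⟦X⟧} (hφ : X ^ r ∣ φ)
    (hψ : X ^ s ∣ ψ) :
    coeff (r + s) (φ * ψ) = coeff r φ * coeff s ψ := by
  obtain ⟨φ, rfl⟩ := hφ
  obtain ⟨ψ, rfl⟩ := hψ
  rw [mul_mul_mul_comm, ← pow_add, add_comm r s]
  simp only [coeff_X_pow_mul', le_refl, if_true, Nat.sub_self, coeff_zero_eq_constantCoeff,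
    map_mul]

end CommSemiring

section CommRing

variable {A : Type*} [CommRing A]

theorem map_rescale_neg_one {B : Type*} [CommRing B] (f : A →+* B) (φ : A⟦X⟧) :
    map f (rescale (-1) φ) = rescale (-1) (map f φ) := by
  rw [← rescale_map, map_neg, map_one]

theorem coeff_two_mul_mul_rescale_neg_one {r : ℕ} {φ : A⟦X⟧} (h : X ^ r ∣ φ) :
    coeff (2 * r) (φ * rescale (-1) φ) = (-1) ^ r * coeff r φ ^ 2 := by
  rw [two_mul, coeff_add_mul_of_X_pow_dvd h (X_pow_dvd_rescale _ h), coeff_rescale]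
  ring

end CommRing

section Exp

variable {A : Type*} [CommRing A] [Algebra ℚ A]

theorem derivative_rescale_exp (t : A) :
    d⁄dX A (rescale t (exp A)) = C t * rescale t (exp A) := by
  rw [derivative_rescale, derivative_exp]

theorem rescale_exp_mul_rescale_neg_exp (t : A) :
    rescale t (exp A) * rescale (-t) (exp A) = 1 := by
  rw [exp_mul_exp_eq_exp_add, add_neg_cancel, rescale_zero_apply, constantCoeff_exp, map_one]

/-- The error terms `u = f₁ - g`, `v = f₂ - e^{tX} g` enter the Wronskian only through
`u`, `v` and `u' g`, `v' g`; since `X ∣ g`, all of these are divisible by `X^(k+1)`. -/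
theorem coeff_wronskian_of_X_pow_dvd (t : A) {f₁ f₂ g : A⟦X⟧} {k : ℕ} (hg : X ∣ g)
    (h₁ : X ^ (k + 1) ∣ f₁ - g) (h₂ : X ^ (k + 1) ∣ f₂ - rescale t (exp A) * g) :
    coeff k (d⁄dX A f₂ * f₁ - d⁄dX A f₁ * f₂) = t * coeff k (f₁ * f₂) := by
  set E := rescale t (exp A)
  set u := f₁ - g
  set v := f₂ - E * g
  have hW : d⁄dX A f₂ * f₁ - d⁄dX A f₁ * f₂ - C t * (f₁ * f₂)
      = (d⁄dX A v - E * d⁄dX A u) * g + u * (E * d⁄dX A g + d⁄dX A v - C t * v)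
        - v * (d⁄dX A g + C t * g + d⁄dX A u) := by
    have hf₁ : f₁ = g + u := by ring
    have hf₂ : f₂ = E * g + v := by ring
    rw [hf₁, hf₂, map_add, map_add, Derivation.leibniz, smul_eq_mul, smul_eq_mul,
      derivative_rescale_exp]
    ring
  have hdvd : X ^ (k + 1) ∣ d⁄dX A f₂ * f₁ - d⁄dX A f₁ * f₂ - C t * (f₁ * f₂) := by
    have hXg : X ^ (k + 1) ∣ X ^ k * g := by
      rw [pow_succ]
      exact mul_dvd_mul_left _ hg
    rw [hW]
    refine dvd_sub (dvd_add ?_ (dvd_mul_of_dvd_left h₁ _)) (dvd_mul_of_dvd_left h₂ _)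
    exact hXg.trans (mul_dvd_mul_right (dvd_sub (X_pow_dvd_derivative h₂)
      (dvd_mul_of_dvd_right (X_pow_dvd_derivative h₁) _)) _)
  have := X_pow_dvd_iff.mp hdvd k (lt_add_one k)
  rwa [map_sub, coeff_C_mul, sub_eq_zero] at this

end Exp

section IsDomain

variable {A : Type*} [CommRing A] [IsDomain A]

theorem coeff_eq_neg_one_pow_mul_of_X_pow_dvd {r : ℕ} {f h : A⟦X⟧} (hf : X ^ r ∣ f)
    (hh : X ^ r ∣ h)
    (hg : coeff (2 * r) ((f - rescale (-1) h) * rescale (-1) (f - rescale (-1) h)) = 0) :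
    coeff r f = (-1) ^ r * coeff r h := by
  rw [coeff_two_mul_mul_rescale_neg_one (dvd_sub hf (X_pow_dvd_rescale _ hh))] at hg
  simpa [coeff_rescale, sub_eq_zero] using hg

theorem X_pow_dvd_of_coeff_mul_eq_zero {m : ℕ} {f h : A⟦X⟧}
    (hfh : ∀ r < m, coeff (2 * r) (f * h) = 0)
    (hg : ∀ r < m,
      coeff (2 * r) ((f - rescale (-1) h) * rescale (-1) (f - rescale (-1) h)) = 0) :
    X ^ m ∣ f ∧ X ^ m ∣ h := by
  induction m with
  | zero => simp
  | succ m ih =>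
    obtain ⟨hf, hh⟩ := ih (fun r hr => hfh r (by omega)) (fun r hr => hg r (by omega))
    have hfm := coeff_eq_neg_one_pow_mul_of_X_pow_dvd hf hh (hg m (by omega))
    have hhm : coeff m h = 0 := by
      simpa [two_mul, coeff_add_mul_of_X_pow_dvd hf hh, hfm] using hfh m (by omega)
    exact ⟨X_pow_succ_dvd hf (by rw [hfm, hhm, mul_zero]), X_pow_succ_dvd hh hhm⟩

end IsDomain

end PowerSeries

namespace GaGraph

open PowerSeries

section GenSeries

variable {R : Type*} [Semiring R] {n : ℕ}

noncomputable def genSeries (v : Fin (n + 1) → R) : R⟦X⟧ :=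
  mk fun i => if h : i < n + 1 then v ⟨i, h⟩ else 0

theorem coeff_genSeries_of_lt (v : Fin (n + 1) → R) {i : ℕ} (h : i < n + 1) :
    coeff i (genSeries v) = v ⟨i, h⟩ := by
  rw [genSeries, coeff_mk, dif_pos h]

@[simp]
theorem coeff_genSeries_val (v : Fin (n + 1) → R) (i : Fin (n + 1)) :
    coeff i (genSeries v) = v i :=
  coeff_genSeries_of_lt v i.isLt

theorem map_genSeries {S : Type*} [Semiring S] (f : R →+* S) (v : Fin (n + 1) → R) :
    map f (genSeries v) = genSeries (f ∘ v) := by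
  ext i
  rw [coeff_map, genSeries, genSeries, coeff_mk, coeff_mk]
  split_ifs <;> simp

end GenSeries

section Closure

open MvPolynomial (eval)

variable {K : Type*} [Field K] {n : ℕ}

def IsInGraphClosure (a b : Fin (n + 1) → K) : Prop :=
  ∀ P : MvPolynomial (Fin (n + 1) ⊕ Fin (n + 1)) K,
    (∀ (x : Fin (n + 1) → K) (t : K), eval (Sum.elim x (gaAct K n t x)) P = 0) →
      eval (Sum.elim a b) P = 0

def IsTimeQuotient (N D : MvPolynomial (Fin (n + 1) ⊕ Fin (n + 1)) K) : Prop :=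
  ∀ (x : Fin (n + 1) → K) (t : K),
    eval (Sum.elim x (gaAct K n t x)) N = t * eval (Sum.elim x (gaAct K n t x)) D

theorem sum_Iic_mul_pow_mul_pow_eq_pow_mul_gaAct (t d : K) (x : Fin (n + 1) → K)
    (j : Fin (n + 1)) :
    ∑ i ∈ Finset.Iic j,
        1 / ((j : ℕ) - (i : ℕ)).factorial * (t * d) ^ ((j : ℕ) - (i : ℕ)) * d ^ (i : ℕ) * x i
      = d ^ (j : ℕ) * gaAct K n t x j := by
  rw [gaAct, Finset.mul_sum]
  refine Finset.sum_congr rfl fun i hi => ?_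
  have hij : (i : ℕ) ≤ j := Fin.le_iff_val_le_val.mp (Finset.mem_Iic.mp hi)
  rw [mul_pow, ← Nat.sub_add_cancel hij, pow_add, Nat.add_sub_cancel]
  ring

theorem gaAct_div_eq_of_isTimeQuotient {a b : Fin (n + 1) → K} (hab : IsInGraphClosure a b)
    {N D : MvPolynomial (Fin (n + 1) ⊕ Fin (n + 1)) K} (hND : IsTimeQuotient N D)
    (hD : eval (Sum.elim a b) D ≠ 0) :
    gaAct K n (eval (Sum.elim a b) N / eval (Sum.elim a b) D) a = b := by
  funext j
  -- `P` is `D ^ j * (y_j - (t * x)_j)`, homogenised in `t = N / D`.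
  set P : MvPolynomial (Fin (n + 1) ⊕ Fin (n + 1)) K :=
    MvPolynomial.X (Sum.inr j) * D ^ (j : ℕ)
      - ∑ i ∈ Finset.Iic j, MvPolynomial.C (1 / ((j : ℕ) - (i : ℕ)).factorial : K)
          * N ^ ((j : ℕ) - (i : ℕ)) * D ^ (i : ℕ) * MvPolynomial.X (Sum.inl i)
  have eval_P (v) : eval v P = v (Sum.inr j) * eval v D ^ (j : ℕ)
      - ∑ i ∈ Finset.Iic j, 1 / ((j : ℕ) - (i : ℕ)).factorial
        * eval v N ^ ((j : ℕ) - (i : ℕ)) * eval v D ^ (i : ℕ) * v (Sum.inl i) := by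
    simp [P]
  have hP := hab P fun x t => by
    rw [eval_P, hND, sum_Iic_mul_pow_mul_pow_eq_pow_mul_gaAct]
    simp [mul_comm]
  rw [eval_P, sub_eq_zero, ← div_mul_cancel₀ (eval (Sum.elim a b) N) hD,
    sum_Iic_mul_pow_mul_pow_eq_pow_mul_gaAct] at hP
  exact mul_left_cancel₀ (pow_ne_zero _ hD) (hP.symm.trans (mul_comm _ _))

theorem eval_eq_zero_of_isTimeQuotient {a b : Fin (n + 1) → K} (hab : IsInGraphClosure a b)
    (hnot : ¬ ∃ t : K, gaAct K n t a = b) {N D : MvPolynomial (Fin (n + 1) ⊕ Fin (n + 1)) K}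
    (hND : IsTimeQuotient N D) : eval (Sum.elim a b) D = 0 :=
  by_contra fun hD => hnot ⟨_, gaAct_div_eq_of_isTimeQuotient hab hND hD⟩

end Closure

section TimeQuotients

open MvPolynomial (eval)

variable {K : Type*} [Field K] {n : ℕ}

/-- `∑ xᵢ sⁱ`, with the source coordinates `xᵢ` as coefficients. -/
noncomputable def sourceSeries (K : Type*) [Field K] (n : ℕ) :
    (MvPolynomial (Fin (n + 1) ⊕ Fin (n + 1)) K)⟦X⟧ :=
  genSeries fun i => MvPolynomial.X (Sum.inl i)

noncomputable def targetSeries (K : Type*) [Field K] (n : ℕ) :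
    (MvPolynomial (Fin (n + 1) ⊕ Fin (n + 1)) K)⟦X⟧ :=
  genSeries fun i => MvPolynomial.X (Sum.inr i)

/-- `x(s) - y(-s)`. -/
noncomputable def reflSubSeries (K : Type*) [Field K] (n : ℕ) :
    (MvPolynomial (Fin (n + 1) ⊕ Fin (n + 1)) K)⟦X⟧ :=
  sourceSeries K n - rescale (-1) (targetSeries K n)

@[simp]
theorem map_eval_sourceSeries (x y : Fin (n + 1) → K) :
    map (eval (Sum.elim x y)) (sourceSeries K n) = genSeries x := by
  rw [sourceSeries, map_genSeries]
  congr
  ext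
  simp

@[simp]
theorem map_eval_targetSeries (x y : Fin (n + 1) → K) :
    map (eval (Sum.elim x y)) (targetSeries K n) = genSeries y := by
  rw [targetSeries, map_genSeries]
  congr
  ext
  simp

@[simp]
theorem map_eval_reflSubSeries (x y : Fin (n + 1) → K) :
    map (eval (Sum.elim x y)) (reflSubSeries K n) = genSeries x - rescale (-1) (genSeries y) := by
  rw [reflSubSeries, map_sub, map_rescale_neg_one, map_eval_sourceSeries, map_eval_targetSeries]

variable [CharZero K]

theorem gaAct_eq_coeff (t : K) (x : Fin (n + 1) → K) (j : Fin (n + 1)) :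
    gaAct K n t x j = coeff j (rescale t (exp K) * genSeries x) := by
  rw [mul_comm, coeff_mul, Finset.Nat.sum_antidiagonal_eq_sum_range_succ
    (fun i l => coeff i (genSeries x) * coeff l (rescale t (exp K))), Nat.succ_eq_add_one,
    Nat.range_succ_eq_Iic, ← Fin.map_valEmbedding_Iic, Finset.sum_map, gaAct]
  refine Finset.sum_congr rfl fun i _ => ?_
  simp [coeff_rescale, coeff_exp, div_eq_mul_inv, mul_comm]

theorem X_pow_dvd_genSeries_gaAct_sub (t : K) (x : Fin (n + 1) → K) :
    X ^ (n + 1) ∣ genSeries (gaAct K n t x) - rescale t (exp K) * genSeries x := by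
  refine X_pow_dvd_iff.mpr fun j hj => ?_
  rw [map_sub, coeff_genSeries_of_lt _ hj, gaAct_eq_coeff, sub_self]

theorem isTimeQuotient_coeff (F₁ F₂ : (MvPolynomial (Fin (n + 1) ⊕ Fin (n + 1)) K)⟦X⟧)
    (k : ℕ)
    (h : ∀ (x : Fin (n + 1) → K) (t : K), ∃ g : K⟦X⟧, X ∣ g ∧
      X ^ (k + 1) ∣ map (eval (Sum.elim x (gaAct K n t x))) F₁ - g ∧
      X ^ (k + 1) ∣ map (eval (Sum.elim x (gaAct K n t x))) F₂ - rescale t (exp K) * g) :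
    IsTimeQuotient (coeff k (d⁄dX _ F₂ * F₁ - d⁄dX _ F₁ * F₂)) (coeff k (F₁ * F₂)) := by
  intro x t
  obtain ⟨g, hg, h₁, h₂⟩ := h x t
  rw [← coeff_map, ← coeff_map, map_sub, map_mul, map_mul, map_mul, ← derivative_map,
    ← derivative_map]
  exact coeff_wronskian_of_X_pow_dvd t hg h₁ h₂

/-- The factor `X` makes the constant term of the comparison series `X x(s)` vanish. -/
theorem isTimeQuotient_X_mul {k : ℕ} (hk : k ≤ n + 1) :
    IsTimeQuotient
      (coeff k (d⁄dX _ (X * targetSeries K n) * (X * sourceSeries K n)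
        - d⁄dX _ (X * sourceSeries K n) * (X * targetSeries K n)))
      (coeff k (X * sourceSeries K n * (X * targetSeries K n))) := by
  refine isTimeQuotient_coeff _ _ k fun x t => ⟨X * genSeries x, dvd_mul_right _ _, ?_, ?_⟩
  · simp
  · rw [map_mul, map_X, map_eval_targetSeries, mul_left_comm, ← mul_sub]
    exact (pow_dvd_pow X (show k + 1 ≤ n + 1 + 1 by omega)).trans
      (by rw [pow_succ']; exact mul_dvd_mul_left X (X_pow_dvd_genSeries_gaAct_sub t x))

theorem isTimeQuotient_reflSubSeries {k : ℕ} (hk : k ≤ n) :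
    IsTimeQuotient
      (coeff k (d⁄dX _ (-rescale (-1) (reflSubSeries K n)) * reflSubSeries K n
        - d⁄dX _ (reflSubSeries K n) * -rescale (-1) (reflSubSeries K n)))
      (coeff k (reflSubSeries K n * -rescale (-1) (reflSubSeries K n))) := by
  refine isTimeQuotient_coeff _ _ k fun x t => ?_
  have hF := map_eval_reflSubSeries x (gaAct K n t x)
  set E := rescale t (exp K)
  set x' := genSeries x
  set y' := genSeries (gaAct K n t x)
  have hdvd : X ^ (k + 1) ∣ y' - E * x' :=
    (pow_dvd_pow X (by omega)).trans (X_pow_dvd_genSeries_gaAct_sub t x)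
  refine ⟨x' - rescale (-1) (E * x'), by simp [X_dvd_iff, E], ?_, ?_⟩
  · have : x' - rescale (-1) y' - (x' - rescale (-1) (E * x')) = -rescale (-1) (y' - E * x') := by
      rw [map_sub]
      ring
    rw [hF, this, dvd_neg]
    exact X_pow_dvd_rescale _ hdvd
  · have hE : E * rescale (-1) E = 1 := by
      rw [rescale_rescale, mul_neg_one]
      exact rescale_exp_mul_rescale_neg_exp t
    have : -rescale (-1) (x' - rescale (-1) y') - E * (x' - rescale (-1) (E * x'))
        = y' - E * x' := by
      simp only [map_sub, map_mul, rescale_rescale, mul_neg_one, neg_neg, rescale_one,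
        RingHom.id_apply]
      linear_combination rescale (-1) x' * hE
    rwa [map_neg, map_rescale_neg_one, hF, this]

end TimeQuotients

section ClosurePoint

open MvPolynomial (eval)

variable {K : Type*} [Field K] [CharZero K] {n : ℕ} {a b : Fin (n + 1) → K}

theorem coeff_genSeries_mul_eq_zero (hab : IsInGraphClosure a b)
    (hnot : ¬ ∃ t : K, gaAct K n t a = b) {k : ℕ} (hk : k < n) :
    coeff k (genSeries a * genSeries b) = 0 := by
  have := eval_eq_zero_of_isTimeQuotient hab hnot (isTimeQuotient_X_mul (k := k + 2) (by omega))
  rwa [← coeff_map, map_mul (map _), map_mul (map _), map_mul (map _), map_X,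
    map_eval_sourceSeries, map_eval_targetSeries, mul_mul_mul_comm, ← sq, coeff_X_pow_mul] at this

theorem coeff_reflSub_mul_rescale_eq_zero (hab : IsInGraphClosure a b)
    (hnot : ¬ ∃ t : K, gaAct K n t a = b) {k : ℕ} (hk : k ≤ n) :
    coeff k ((genSeries a - rescale (-1) (genSeries b))
      * rescale (-1) (genSeries a - rescale (-1) (genSeries b))) = 0 := by
  have := eval_eq_zero_of_isTimeQuotient hab hnot (isTimeQuotient_reflSubSeries (K := K) hk)
  rwa [← coeff_map, map_mul, map_neg, map_rescale_neg_one, map_eval_reflSubSeries, mul_neg,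
    map_neg, neg_eq_zero] at this

end ClosurePoint

end GaGraph

open GaGraph PowerSeries

/-- Let `n = 2m`. Every point `(a,b)` of the Zariski closure of the graph
`Γ = {(x, t*x)}` of the basic `G_a`-action on `ℂ^{n+1}` which is not in `Γ`
satisfies: the first `m` coordinates of `a` and `b` vanish and `b_m = (-1)^m a_m`. -/
theorem graph_closure_minus_graph (m : ℕ) (a b : Fin (2 * m + 1) → ℂ)
    (hclos : ∀ P : MvPolynomial (Fin (2 * m + 1) ⊕ Fin (2 * m + 1)) ℂ,
      (∀ (x : Fin (2 * m + 1) → ℂ) (t : ℂ),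
        MvPolynomial.eval (Sum.elim x (gaAct ℂ (2 * m) t x)) P = 0) →
      MvPolynomial.eval (Sum.elim a b) P = 0)
    (hnot : ¬ ∃ t : ℂ, gaAct ℂ (2 * m) t a = b) :
    (∀ i : Fin (2 * m + 1), (i : ℕ) < m → a i = 0 ∧ b i = 0) ∧
    b ⟨m, by omega⟩ = (-1 : ℂ) ^ m * a ⟨m, by omega⟩ := by
  obtain ⟨ha, hb⟩ := X_pow_dvd_of_coeff_mul_eq_zero (m := m)
    (fun r hr => coeff_genSeries_mul_eq_zero hclos hnot (by omega))
    (fun r hr => coeff_reflSub_mul_rescale_eq_zero hclos hnot (by omega))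
  refine ⟨fun i hi => ⟨?_, ?_⟩, ?_⟩
  · simpa using X_pow_dvd_iff.mp ha i hi
  · simpa using X_pow_dvd_iff.mp hb i hi
  · have hm := coeff_eq_neg_one_pow_mul_of_X_pow_dvd ha hb
      (coeff_reflSub_mul_rescale_eq_zero hclos hnot le_rfl)
    rw [coeff_genSeries_of_lt _ (by omega), coeff_genSeries_of_lt _ (by omega)] at hm
    rw [hm, ← mul_assoc, ← pow_add, ← two_mul, pow_mul, neg_one_sq, one_pow, one_mul]
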